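/- arXiv:2304.09672 — 3 statements merged into one kernel-verified Lean document; each statement's English description precedes it below -/
import Mathlib

section
/- Let s ≥ 1 be an integer and c_1 < … < c_s be s distinct real numbers symmetric with respect to 1/2 (c_i + c_{s+1−i} = 1 for all i). If the polynomial τ(π) has no root in the closed left half-plane ℂ⁻ = {z ∈ ℂ : Re(z) ≤ 0}, then the associated Runge–Kutta collocation method is Â-stable (A-stable, AS-stable and ASI-stable). -/
open Polynomial Matrix MeasureTheory

noncomputable section

/-- Lagrange basis function `ℓ_i(t) = ∏_{j≠i} (t - c_j)/(c_i - c_j)`. -/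
def lagrangeFun (s : ℕ) (c : Fin s → ℝ) (i : Fin s) (t : ℝ) : ℝ :=
  ∏ j ∈ Finset.univ.erase i, (t - c j) / (c i - c j)

/-- Coefficient matrix `A` of the collocation method: `a_{ij} = ∫_0^{c_i} ℓ_j`. -/
def collocA (s : ℕ) (c : Fin s → ℝ) : Matrix (Fin s) (Fin s) ℝ :=
  Matrix.of fun i j => ∫ t in (0:ℝ)..(c i), lagrangeFun s c j t

/-- Weight vector `b` of the collocation method: `b_i = ∫_0^1 ℓ_i`. -/
def collocB (s : ℕ) (c : Fin s → ℝ) : Fin s → ℝ :=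
  fun i => ∫ t in (0:ℝ)..(1:ℝ), lagrangeFun s c i t

/-- `π = ∏ (X - c_i)`. -/
def piPoly (s : ℕ) (c : Fin s → ℝ) : Polynomial ℝ :=
  ∏ i : Fin s, (Polynomial.X - Polynomial.C (c i))

/-- The linear map `τ` sending `Σ a_k X^k` to `Σ k! a_k X^k`. -/
def tauP (p : Polynomial ℝ) : Polynomial ℝ :=
  ∑ k ∈ p.support, Polynomial.C ((k.factorial : ℝ) * p.coeff k) * Polynomial.X ^ k

/-- The matrix `A` viewed as a complex matrix. -/
def collocAC (s : ℕ) (c : Fin s → ℝ) : Matrix (Fin s) (Fin s) ℂ :=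
  (collocA s c).map (fun x => (x : ℂ))

/-- The weight vector `b` viewed as a complex vector. -/
def collocBC (s : ℕ) (c : Fin s → ℝ) : Fin s → ℂ :=
  fun i => (collocB s c i : ℂ)

/-- The linear stability function `R(λ) = 1 + λ bᵀ (I - λ A)⁻¹ 𝟙`. -/
def stabR (s : ℕ) (c : Fin s → ℝ) (lam : ℂ) : ℂ :=
  1 + lam * (collocBC s c ⬝ᵥ ((1 - lam • collocAC s c)⁻¹ *ᵥ (fun _ => 1)))

/-- A-stability: `|R(λ)| ≤ 1` on the closed left half-plane (where defined). -/
def AStable (s : ℕ) (c : Fin s → ℝ) : Prop :=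
  ∀ lam : ℂ, lam.re ≤ 0 → IsUnit (1 - lam • collocAC s c).det →
    ‖stabR s c lam‖ ≤ 1

/-- I-stability: `|R(λ)| ≤ 1` on the imaginary axis (where defined). -/
def IStable (s : ℕ) (c : Fin s → ℝ) : Prop :=
  ∀ lam : ℂ, lam.re = 0 → IsUnit (1 - lam • collocAC s c).det →
    ‖stabR s c lam‖ ≤ 1

/-- AS-stability: `I - λA` invertible on `ℂ⁻` and `λ bᵀ (I - λA)⁻¹` uniformly bounded there. -/
def ASStable (s : ℕ) (c : Fin s → ℝ) : Prop :=
  (∀ lam : ℂ, lam.re ≤ 0 → IsUnit (1 - lam • collocAC s c).det) ∧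
  ∃ M : ℝ, ∀ lam : ℂ, lam.re ≤ 0 → ∀ j,
    ‖lam * (collocBC s c ᵥ* (1 - lam • collocAC s c)⁻¹) j‖ ≤ M

/-- ASI-stability: `I - λA` invertible on `ℂ⁻` and `(I - λA)⁻¹` uniformly bounded there. -/
def ASIStable (s : ℕ) (c : Fin s → ℝ) : Prop :=
  (∀ lam : ℂ, lam.re ≤ 0 → IsUnit (1 - lam • collocAC s c).det) ∧
  ∃ M : ℝ, ∀ lam : ℂ, lam.re ≤ 0 → ∀ i j,
    ‖(1 - lam • collocAC s c)⁻¹ i j‖ ≤ M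

/-- IS-stability: `I - λA` invertible on `iℝ` and `λ bᵀ (I - λA)⁻¹` uniformly bounded there. -/
def ISStable (s : ℕ) (c : Fin s → ℝ) : Prop :=
  (∀ lam : ℂ, lam.re = 0 → IsUnit (1 - lam • collocAC s c).det) ∧
  ∃ M : ℝ, ∀ lam : ℂ, lam.re = 0 → ∀ j,
    ‖lam * (collocBC s c ᵥ* (1 - lam • collocAC s c)⁻¹) j‖ ≤ M

/-- ISI-stability: `I - λA` invertible on `iℝ` and `(I - λA)⁻¹` uniformly bounded there. -/
def ISIStable (s : ℕ) (c : Fin s → ℝ) : Prop :=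
  (∀ lam : ℂ, lam.re = 0 → IsUnit (1 - lam • collocAC s c).det) ∧
  ∃ M : ℝ, ∀ lam : ℂ, lam.re = 0 → ∀ i j,
    ‖(1 - lam • collocAC s c)⁻¹ i j‖ ≤ M

end

/-!
For `μ ≠ 0`, a solution `w` of `(1 - μA) w = v₀ 𝟙` is the vector of node values of the
collocation polynomial `u = v₀ + μ ∫₀ˣ ∑ⱼ wⱼ ℓⱼ`, which has degree `≤ s` and satisfies `u' = μ u`
at the nodes. Hence `u' - μ u = k π`, whose polynomial solutions are the multiples of
`Q_μ = ∑ⱼ μ^(s-j) π^(j)`. So `1 - μA` is injective as soon as `Q_μ(0) = μ^s τ(π)(1/μ) ≠ 0`, and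
`R(μ) = u(1) / u(0) = Q_μ(1) / Q_μ(0)`. The symmetry of the nodes gives `π(1 - X) = (-1)^s π`,
hence `Q_μ(1) = Q_{-μ}(0)` and `|R(μ)| = |τ(π)(-1/μ)| / |τ(π)(1/μ)| ≤ 1`, because the roots of
the real polynomial `τ(π)` lie in the open right half-plane. Finally `A` is invertible since
`π(0) = τ(π)(0) ≠ 0`, which makes the resolvent bounded near `μ = ∞` as well.
-/

open Finset ComplexConjugate

noncomputable section

lemma Complex.inv_re_nonpos {z : ℂ} (hz : z.re ≤ 0) : z⁻¹.re ≤ 0 := by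
  rw [Complex.inv_re]
  exact div_nonpos_of_nonpos_of_nonneg hz (Complex.normSq_nonneg z)

lemma Complex.norm_neg_conj_sub_le {z r : ℂ} (hz : z.re ≤ 0) (hr : 0 ≤ r.re) :
    ‖-conj z - r‖ ≤ ‖z - r‖ := by
  rw [Complex.norm_def, Complex.norm_def]
  refine Real.sqrt_le_sqrt ?_
  simp only [Complex.normSq_apply, Complex.sub_re, Complex.sub_im, Complex.neg_re,
    Complex.neg_im, Complex.conj_re, Complex.conj_im]
  nlinarith [mul_nonneg (neg_nonneg.mpr hz) hr]

namespace Polynomial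

section Antideriv

variable {K : Type*} [Field K]

def antideriv (p : K[X]) : K[X] := p.sum fun k a => C (a / (k + 1)) * X ^ (k + 1)

@[simp]
lemma derivative_antideriv [CharZero K] (p : K[X]) : derivative (antideriv p) = p := by
  conv_rhs => rw [p.as_sum_support_C_mul_X_pow]
  rw [antideriv, Polynomial.sum, map_sum]
  refine sum_congr rfl fun k _ => ?_
  rw [derivative_C_mul_X_pow, Nat.cast_succ, Nat.add_sub_cancel,
    div_mul_cancel₀ _ (Nat.cast_add_one_ne_zero k)]

@[simp]
lemma eval_zero_antideriv (p : K[X]) : (antideriv p).eval 0 = 0 := by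
  simp [antideriv, Polynomial.sum, eval_finsetSum]

lemma natDegree_antideriv_le (p : K[X]) : (antideriv p).natDegree ≤ p.natDegree + 1 :=
  natDegree_sum_le_of_forall_le _ _ fun k hk =>
    (natDegree_C_mul_X_pow_le _ _).trans (by have := le_natDegree_of_mem_supp k hk; omega)

end Antideriv

lemma integral_eval (p : ℝ[X]) (a b : ℝ) :
    ∫ t in a..b, p.eval t = (antideriv p).eval b - (antideriv p).eval a :=
  intervalIntegral.integral_eq_sub_of_hasDerivAt
    (fun t _ => by simpa using (antideriv p).hasDerivAt t) (p.continuous.intervalIntegrable a b)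

@[simp]
lemma eval_map_ofReal (p : ℝ[X]) (x : ℝ) : (p.map (algebraMap ℝ ℂ)).eval (x : ℂ) = p.eval x :=
  (eval_map_algebraMap p (x : ℂ)).trans (aeval_ofReal p x)

lemma eval_zero_iterate_derivative {R : Type*} [Semiring R] (p : R[X]) (j : ℕ) :
    (derivative^[j] p).eval 0 = j.factorial * p.coeff j := by
  rw [← coeff_zero_eq_eval_zero, coeff_iterate_derivative, zero_add, Nat.descFactorial_self,
    nsmul_eq_mul]

section Resolvent

variable {R : Type*} [CommRing R]

/-- `μ ^ n (1 - D / μ)⁻¹ p`, written without division. -/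
def resolventPoly (n : ℕ) (μ : R) (p : R[X]) : R[X] :=
  ∑ j ∈ range (n + 1), μ ^ (n - j) • derivative^[j] p

lemma smul_resolventPoly_sub_derivative {n : ℕ} {p : R[X]} (hp : p.natDegree ≤ n) (μ : R) :
    μ • resolventPoly n μ p - derivative (resolventPoly n μ p) = μ ^ (n + 1) • p := by
  have hvanish : derivative^[n + 1] p = 0 := iterate_derivative_eq_zero (by omega)
  set f : ℕ → R[X] := fun j => μ ^ (n - j + 1) • derivative^[j] p
  have hterm : ∀ j ∈ range (n + 1), μ • (μ ^ (n - j) • derivative^[j] p)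
      - derivative (μ ^ (n - j) • derivative^[j] p) = f j - f (j + 1) := by
    intro j hj
    simp only [f, derivative_smul, smul_smul, ← Function.iterate_succ_apply' derivative,
      ← pow_succ']
    rcases (Nat.lt_succ_iff.mp (mem_range.mp hj)).lt_or_eq with hjn | rfl
    · rw [show n - (j + 1) + 1 = n - j by omega]
    · simp [hvanish]
  rw [resolventPoly, smul_sum, derivative_sum, ← sum_sub_distrib, sum_congr rfl hterm,
    sum_range_sub']
  simp [f, hvanish]

lemma eq_zero_of_derivative_eq_smul [NoZeroDivisors R] {μ : R} (hμ : μ ≠ 0) {W : R[X]}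
    (h : derivative W = μ • W) : W = 0 := by
  have hcoeff := congrArg (coeff · W.natDegree) h
  simp only [coeff_derivative, coeff_smul, coeff_natDegree_succ_eq_zero, zero_mul,
    smul_eq_mul] at hcoeff
  exact leadingCoeff_eq_zero.mp ((mul_eq_zero.mp hcoeff.symm).resolve_left hμ)

lemma pow_smul_add_smul_resolventPoly_eq_zero [NoZeroDivisors R] {n : ℕ} {μ k : R}
    {p u : R[X]} (hμ : μ ≠ 0) (hp : p.natDegree ≤ n) (hu : derivative u - μ • u = k • p) :
    μ ^ (n + 1) • u + k • resolventPoly n μ p = 0 := by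
  refine eq_zero_of_derivative_eq_smul hμ ?_
  have hQ : derivative (resolventPoly n μ p) = μ • resolventPoly n μ p - μ ^ (n + 1) • p := by
    rw [← smul_resolventPoly_sub_derivative hp μ, sub_sub_cancel]
  rw [derivative_add, derivative_smul, derivative_smul, eq_add_of_sub_eq hu, hQ]
  module

lemma eval_one_resolventPoly {n : ℕ} {p : R[X]} (hsym : p.comp (1 - X) = (-1 : R) ^ n • p)
    (μ : R) : (resolventPoly n μ p).eval 1 = (resolventPoly n (-μ) p).eval 0 := by
  have hderiv : ∀ j, (derivative^[j] p).eval 1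
      = (-1) ^ j * (-1) ^ n * (derivative^[j] p).eval 0 := by
    intro j
    have h := congrArg (eval 0) (iterate_derivative_comp_one_sub_X p j)
    rw [hsym, iterate_derivative_smul, eval_smul, eval_mul, eval_comp] at h
    simp only [eval_sub, eval_one, eval_X, sub_zero, eval_pow, eval_neg] at h
    have hsq : ((-1 : R) ^ j) * (-1) ^ j = 1 := by rw [← mul_pow]; simp
    linear_combination (-(-1 : R) ^ j) * h - (derivative^[j] p).eval 1 * hsq
  simp only [resolventPoly, eval_finsetSum, eval_smul, smul_eq_mul, hderiv]
  refine sum_congr rfl fun j hj => ?_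
  have hjn : j ≤ n := Nat.lt_succ_iff.mp (mem_range.mp hj)
  rw [neg_pow μ, show (-1 : R) ^ (n - j) = (-1) ^ j * (-1) ^ n by
    rw [← pow_add, show j + n = (n - j) + 2 * j by omega, pow_add, pow_mul, neg_one_sq, one_pow,
      mul_one]]
  ring

end Resolvent

lemma coeff_tauP (p : ℝ[X]) (k : ℕ) : (tauP p).coeff k = k.factorial * p.coeff k := by
  simp only [tauP, finsetSum_coeff, coeff_C_mul_X_pow, sum_ite_eq, mem_support_iff]
  split_ifs with hk
  · rfl
  · rw [not_not.mp hk, mul_zero]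

lemma coeff_zero_tauP (p : ℝ[X]) : (tauP p).coeff 0 = p.eval 0 := by
  rw [coeff_tauP, Nat.factorial_zero, Nat.cast_one, one_mul, coeff_zero_eq_eval_zero]

lemma eval_zero_resolventPoly_map {n : ℕ} {p : ℝ[X]} (hp : p.natDegree ≤ n) {μ : ℂ}
    (hμ : μ ≠ 0) :
    (resolventPoly n μ (p.map (algebraMap ℝ ℂ))).eval 0 = μ ^ n * aeval μ⁻¹ (tauP p) := by
  have htau : (tauP p).natDegree < n + 1 :=
    Nat.lt_succ_of_le (natDegree_le_iff_coeff_eq_zero.mpr fun k hk => by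
      rw [coeff_tauP, coeff_eq_zero_of_natDegree_lt (hp.trans_lt hk), mul_zero])
  rw [resolventPoly, aeval_eq_sum_range' htau, eval_finsetSum, mul_sum]
  refine sum_congr rfl fun j hj => ?_
  rw [eval_smul, eval_zero_iterate_derivative, coeff_map, coeff_tauP, inv_pow,
    pow_sub₀ μ hμ (Nat.lt_succ_iff.mp (mem_range.mp hj))]
  simp only [Complex.real_smul, smul_eq_mul, Complex.coe_algebraMap]
  push_cast
  ring

lemma norm_eval_eq_prod_roots (p : ℂ[X]) (x : ℂ) :
    ‖p.eval x‖ = ‖p.leadingCoeff‖ * (p.roots.map fun r => ‖x - r‖).prod := by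
  rw [(IsAlgClosed.splits p).eval_eq_prod_roots, norm_mul]
  congr 1
  simpa [Multiset.map_map] using map_multiset_prod (normHom : ℂ →*₀ ℝ) (p.roots.map (x - ·))

lemma norm_aeval_neg_le {p : ℝ[X]} (hp : ∀ r : ℂ, aeval r p = 0 → 0 ≤ r.re) {z : ℂ}
    (hz : z.re ≤ 0) : ‖aeval (-z) p‖ ≤ ‖aeval z p‖ := by
  have hconj : ‖aeval (-z) p‖ = ‖aeval (-conj z) p‖ := by
    rw [← map_neg, ← Complex.conjAe_coe, ← AlgEquiv.coe_toAlgHom, aeval_algHom_apply,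
      AlgEquiv.coe_toAlgHom, Complex.conjAe_coe, Complex.norm_conj]
  rw [hconj, aeval_def, aeval_def, ← eval_map, ← eval_map, norm_eval_eq_prod_roots,
    norm_eval_eq_prod_roots]
  refine mul_le_mul_of_nonneg_left (Multiset.prod_map_le_prod_map₀ _ _
    (fun _ _ => norm_nonneg _) fun r hr => Complex.norm_neg_conj_sub_le hz (hp r ?_))
    (norm_nonneg _)
  rw [aeval_def, ← eval_map]
  exact (mem_roots'.mp hr).2

end Polynomial

namespace Lagrange

lemma eq_smul_nodal_of_eval_eq_zero {K ι : Type*} [Field K] [Fintype ι] {v : ι → K}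
    (hv : Function.Injective v) {G : K[X]} (hdeg : G.natDegree ≤ Fintype.card ι)
    (hG : ∀ i, G.eval (v i) = 0) : G = G.coeff (Fintype.card ι) • nodal univ v := by
  refine eq_of_degree_sub_lt_of_eval_index_eq univ hv.injOn ?_ fun i _ => by
    rw [hG, eval_smul, eval_nodal_at_node (mem_univ i), smul_zero]
  rw [card_univ, degree_lt_iff_coeff_zero]
  intro m hm
  rw [coeff_sub, coeff_smul, smul_eq_mul]
  rcases hm.lt_or_eq with hm | rfl
  · rw [coeff_eq_zero_of_natDegree_lt (hdeg.trans_lt hm),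
      coeff_eq_zero_of_natDegree_lt (p := nodal univ v) (by rwa [natDegree_nodal, card_univ]),
      mul_zero, sub_zero]
  · rw [← card_univ, ← natDegree_nodal (s := univ) (v := v), nodal_monic.coeff_natDegree,
      mul_one, sub_self]

lemma nodal_comp_one_sub_X {R : Type*} [CommRing R] {s : ℕ} {v : Fin s → R}
    (hsym : ∀ i : Fin s, v i + v i.rev = 1) :
    (nodal univ v).comp (1 - X) = (-1 : R) ^ s • nodal univ v := by
  have hfactor : ∀ i : Fin s, (X - C (v i)).comp (1 - X) = -1 * (X - C (v i.rev)) := fun i => by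
    rw [sub_comp, X_comp, C_comp, eq_sub_of_add_eq' (hsym i), C_sub, C_1]
    ring
  rw [nodal_eq, Polynomial.prod_comp, Finset.prod_congr rfl fun i _ => hfactor i,
    prod_mul_distrib, prod_const, card_univ, Fintype.card_fin,
    Fintype.prod_equiv Fin.revPerm (fun i => X - C (v i.rev)) (fun i => X - C (v i))
      fun _ => rfl, smul_eq_C_mul, C_pow, C_neg, C_1]

end Lagrange

namespace Matrix

lemma norm_vecMul_apply_le {R m n : Type*} [NormedRing R] [Fintype m] (v : m → R)
    (B : Matrix m n R) (j : n) {M : ℝ} (hB : ∀ i, ‖B i j‖ ≤ M) :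
    ‖(v ᵥ* B) j‖ ≤ (∑ i, ‖v i‖) * M := by
  rw [vecMul, dotProduct, sum_mul]
  exact (norm_sum_le _ _).trans (sum_le_sum fun i _ =>
    (norm_mul_le _ _).trans (mul_le_mul_of_nonneg_left (hB i) (norm_nonneg _)))

lemma one_sub_inv_smul_eq {n : Type*} [DecidableEq n] {ν : ℂ} (hν : ν ≠ 0)
    (A : Matrix n n ℂ) : 1 - ν⁻¹ • A = (-ν⁻¹) • (A - ν • 1) := by
  rw [smul_sub, smul_smul, neg_mul, inv_mul_cancel₀ hν]
  module

variable {n : Type*} [Fintype n] [DecidableEq n]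

lemma _root_.IsCompact.exists_bound_matrix_inv {S : Set ℂ} (hS : IsCompact S)
    {f : ℂ → Matrix n n ℂ} (hf : Continuous f) (hdet : ∀ x ∈ S, IsUnit (f x).det) :
    ∃ M, ∀ x ∈ S, ∀ i j, ‖(f x)⁻¹ i j‖ ≤ M := by
  have hcont : ContinuousOn (fun x => of.symm (f x)⁻¹) S := fun x hx =>
    ((continuousAt_matrix_inv _ (NormedRing.inverse_continuousAt (hdet x hx).unit)).comp
      hf.continuousAt).continuousWithinAt
  obtain ⟨M, hM⟩ := hS.exists_bound_of_continuousOn hcont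
  exact ⟨M, fun x hx i j =>
    (norm_le_pi_norm _ j).trans ((norm_le_pi_norm _ i).trans (hM x hx))⟩

lemma inv_one_sub_inv_smul {ν : ℂ} (hν : ν ≠ 0) {A : Matrix n n ℂ}
    (hA : IsUnit (A - ν • 1).det) : (1 - ν⁻¹ • A)⁻¹ = (-ν) • (A - ν • 1)⁻¹ := by
  refine inv_eq_right_inv ?_
  rw [one_sub_inv_smul_eq hν, smul_mul_smul, mul_nonsing_inv _ hA, neg_mul_neg,
    inv_mul_cancel₀ hν, one_smul]

lemma isUnit_det_sub_smul_one_of_re_nonpos (A : Matrix n n ℂ) (hA : IsUnit A.det)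
    (h : ∀ μ : ℂ, μ.re ≤ 0 → IsUnit (1 - μ • A).det) {ν : ℂ} (hν : ν.re ≤ 0) :
    IsUnit (A - ν • 1).det := by
  rcases eq_or_ne ν 0 with rfl | hν0
  · simpa using hA
  have hA' : A - ν • 1 = (-ν) • (1 - ν⁻¹ • A) := by
    rw [one_sub_inv_smul_eq hν0, smul_smul, neg_mul_neg, mul_inv_cancel₀ hν0, one_smul]
  rw [hA', det_smul]
  exact ((isUnit_iff_ne_zero.mpr (neg_ne_zero.mpr hν0)).pow _).mul
    (h _ (Complex.inv_re_nonpos hν))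

/-- Near `μ = 0` the bound comes from compactness; near `μ = ∞` from compactness in the chart
`ν = μ⁻¹`, where `μ (1 - μ A)⁻¹ = -(A - ν)⁻¹` extends continuously to `ν = 0`. -/
lemma exists_bound_inv_one_sub_smul (A : Matrix n n ℂ) (hA : IsUnit A.det)
    (h : ∀ μ : ℂ, μ.re ≤ 0 → IsUnit (1 - μ • A).det) :
    ∃ M, ∀ μ : ℂ, μ.re ≤ 0 → ∀ i j,
      ‖(1 - μ • A)⁻¹ i j‖ ≤ M ∧ ‖μ * (1 - μ • A)⁻¹ i j‖ ≤ M := by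
  set D := {μ : ℂ | μ.re ≤ 0} ∩ Metric.closedBall 0 1
  have hD : IsCompact D :=
    (isCompact_closedBall 0 1).inter_left (isClosed_le Complex.continuous_re continuous_const)
  have hdet : ∀ ν ∈ D, IsUnit (A - ν • 1).det := fun ν hν =>
    isUnit_det_sub_smul_one_of_re_nonpos A hA h hν.1
  obtain ⟨M₁, hM₁⟩ := hD.exists_bound_matrix_inv (f := fun μ => 1 - μ • A) (by fun_prop)
    fun μ hμ => h μ hμ.1
  obtain ⟨M₂, hM₂⟩ := hD.exists_bound_matrix_inv (f := fun ν => A - ν • 1) (by fun_prop) hdet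
  refine ⟨max M₁ M₂, fun μ hre i j => ?_⟩
  rcases le_or_gt ‖μ‖ 1 with hμ | hμ
  · have hbound := hM₁ μ ⟨hre, by simpa using hμ⟩ i j
    refine ⟨hbound.trans (le_max_left _ _), ?_⟩
    rw [norm_mul]
    exact (mul_le_of_le_one_left (norm_nonneg _) hμ).trans (hbound.trans (le_max_left _ _))
  · have hμ0 : μ ≠ 0 := norm_pos_iff.mp (zero_lt_one.trans hμ)
    have hν : μ⁻¹ ∈ D := ⟨Complex.inv_re_nonpos hre, by simpa using inv_le_one_of_one_le₀ hμ.le⟩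
    have hbound := hM₂ μ⁻¹ hν i j
    have hres : (1 - μ • A)⁻¹ = (-μ⁻¹) • (A - μ⁻¹ • 1)⁻¹ := by
      simpa using inv_one_sub_inv_smul (inv_ne_zero hμ0) (hdet _ hν)
    rw [hres, smul_apply, smul_eq_mul, ← mul_assoc, mul_neg, mul_inv_cancel₀ hμ0, norm_mul,
      norm_mul, norm_neg, norm_neg, norm_one, one_mul, norm_inv]
    refine ⟨?_, hbound.trans (le_max_right _ _)⟩
    exact (mul_le_of_le_one_left (norm_nonneg _) (inv_le_one_of_one_le₀ hμ.le)).trans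
      (hbound.trans (le_max_right _ _))

end Matrix

section Collocation

variable {s : ℕ} {c : Fin s → ℝ}

lemma natDegree_piPoly (s : ℕ) (c : Fin s → ℝ) : (piPoly s c).natDegree = s := by
  rw [piPoly, ← Lagrange.nodal_eq, Lagrange.natDegree_nodal, card_univ, Fintype.card_fin]

lemma piPoly_map_eq_nodal (s : ℕ) (c : Fin s → ℝ) :
    (piPoly s c).map (algebraMap ℝ ℂ) = Lagrange.nodal univ fun i => (c i : ℂ) := by
  simp [piPoly, Lagrange.nodal_eq, Polynomial.map_prod]

lemma lagrangeFun_eq_eval_basis (s : ℕ) (c : Fin s → ℝ) (j : Fin s) (t : ℝ) :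
    lagrangeFun s c j t = (Lagrange.basis univ c j).eval t := by
  simp only [lagrangeFun, Lagrange.basis, Lagrange.basisDivisor, eval_prod, eval_mul, eval_C,
    eval_sub, eval_X, div_eq_inv_mul]

lemma integral_lagrangeFun (s : ℕ) (c : Fin s → ℝ) (j : Fin s) (x : ℝ) :
    ∫ t in (0 : ℝ)..x, lagrangeFun s c j t = (antideriv (Lagrange.basis univ c j)).eval x := by
  simp only [lagrangeFun_eq_eval_basis, integral_eval, eval_zero_antideriv, sub_zero]

/-- `x ↦ ∫₀ˣ ∑ⱼ wⱼ ℓⱼ`, whose values at the nodes are the entries of `A w` and whose value at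
`1` is `b ⬝ᵥ w`. -/
def collocPoly (s : ℕ) (c : Fin s → ℝ) (w : Fin s → ℂ) : ℂ[X] :=
  ∑ j, w j • (antideriv (Lagrange.basis univ c j)).map (algebraMap ℝ ℂ)

lemma collocAC_mulVec_apply (w : Fin s → ℂ) (i : Fin s) :
    (collocAC s c *ᵥ w) i = (collocPoly s c w).eval (c i : ℂ) := by
  simp only [collocPoly, collocAC, collocA, mulVec, dotProduct, map_apply, of_apply,
    integral_lagrangeFun, eval_finsetSum, eval_smul, smul_eq_mul, eval_map_ofReal, mul_comm]

lemma collocBC_dotProduct (w : Fin s → ℂ) :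
    collocBC s c ⬝ᵥ w = (collocPoly s c w).eval 1 := by
  simp only [collocPoly, collocBC, collocB, dotProduct, integral_lagrangeFun, eval_finsetSum,
    eval_smul, smul_eq_mul, ← Complex.ofReal_one, eval_map_ofReal, mul_comm]

@[simp]
lemma eval_zero_collocPoly (w : Fin s → ℂ) : (collocPoly s c w).eval 0 = 0 := by
  simp only [collocPoly, eval_finsetSum, eval_smul, eval_zero_map, eval_zero_antideriv, map_zero,
    smul_zero, sum_const_zero]

lemma eval_derivative_collocPoly (hc : Function.Injective c) (w : Fin s → ℂ) (i : Fin s) :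
    (derivative (collocPoly s c w)).eval (c i : ℂ) = w i := by
  simp only [collocPoly, derivative_sum, derivative_smul, derivative_map, derivative_antideriv,
    eval_finsetSum, eval_smul, eval_map_ofReal, smul_eq_mul]
  rw [sum_eq_single i (fun j _ hji => by rw [Lagrange.eval_basis_of_ne hji (mem_univ i)]; simp)
    (by simp), Lagrange.eval_basis_self hc.injOn (mem_univ i), Complex.ofReal_one, mul_one]
lemma natDegree_collocPoly_le (hc : Function.Injective c) (w : Fin s → ℂ) :
    (collocPoly s c w).natDegree ≤ s :=
  natDegree_sum_le_of_forall_le _ _ fun j _ => (natDegree_smul_le _ _).trans <| by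
    rw [natDegree_map]
    refine (natDegree_antideriv_le _).trans ?_
    rw [Lagrange.natDegree_basis hc.injOn (mem_univ j), card_univ, Fintype.card_fin]
    have := j.pos
    omega

lemma eq_zero_of_collocPoly_eq_zero (hc : Function.Injective c) {w : Fin s → ℂ}
    (hw : collocPoly s c w = 0) : w = 0 :=
  funext fun i => by rw [← eval_derivative_collocPoly hc w i, hw]; simp

/-- `Q_μ`, proportional to the collocation polynomial of the stage equations at `μ`. -/
def collocResolvent (s : ℕ) (c : Fin s → ℝ) (μ : ℂ) : ℂ[X] :=
  resolventPoly s μ ((piPoly s c).map (algebraMap ℝ ℂ))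

lemma exists_smul_add_smul_collocResolvent_eq_zero (hc : Function.Injective c) {μ v₀ : ℂ}
    (hμ : μ ≠ 0) {w : Fin s → ℂ} (hw : (1 - μ • collocAC s c) *ᵥ w = fun _ => v₀) :
    ∃ k : ℂ, μ ^ (s + 1) • (C v₀ + μ • collocPoly s c w) + k • collocResolvent s c μ = 0 := by
  set u := C v₀ + μ • collocPoly s c w
  have hval : ∀ i, u.eval (c i : ℂ) = w i := fun i => by
    have hwi := congrFun hw i
    simp only [sub_mulVec, one_mulVec, smul_mulVec, Pi.sub_apply, Pi.smul_apply, smul_eq_mul,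
      collocAC_mulVec_apply] at hwi
    simp only [u, eval_add, eval_C, eval_smul, smul_eq_mul]
    linear_combination -hwi
  have hslope : ∀ i, (derivative u).eval (c i : ℂ) = μ * w i := fun i => by
    simp [u, eval_derivative_collocPoly hc]
  have hdeg : (derivative u - μ • u).natDegree ≤ Fintype.card (Fin s) := by
    have hu : u.natDegree ≤ s := natDegree_add_le_of_degree_le
      ((natDegree_C v₀).le.trans (Nat.zero_le s))
      ((natDegree_smul_le _ _).trans (natDegree_collocPoly_le hc w))
    rw [Fintype.card_fin]
    exact (natDegree_sub_le _ _).trans (max_le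
      (((natDegree_derivative_le u).trans (Nat.sub_le _ _)).trans hu)
      ((natDegree_smul_le μ u).trans hu))
  have hG := Lagrange.eq_smul_nodal_of_eval_eq_zero (v := fun i => (c i : ℂ))
    (Complex.ofReal_injective.comp hc) hdeg
    fun i => by simp [hval, hslope]
  rw [← piPoly_map_eq_nodal] at hG
  exact ⟨_, pow_smul_add_smul_resolventPoly_eq_zero hμ
    (by rw [natDegree_map, natDegree_piPoly]) hG⟩

lemma eval_zero_collocResolvent_ne_zero
    (hroot : ∀ z : ℂ, z.re ≤ 0 → aeval z (tauP (piPoly s c)) ≠ 0) {μ : ℂ} (hμ : μ ≠ 0)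
    (hre : μ.re ≤ 0) : (collocResolvent s c μ).eval 0 ≠ 0 := by
  rw [collocResolvent, eval_zero_resolventPoly_map (natDegree_piPoly s c).le hμ]
  exact mul_ne_zero (pow_ne_zero _ hμ) (hroot _ (Complex.inv_re_nonpos hre))

lemma isUnit_det_one_sub_smul_collocAC (hc : Function.Injective c)
    (hroot : ∀ z : ℂ, z.re ≤ 0 → aeval z (tauP (piPoly s c)) ≠ 0) {μ : ℂ} (hre : μ.re ≤ 0) :
    IsUnit (1 - μ • collocAC s c).det := by
  rcases eq_or_ne μ 0 with rfl | hμ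
  · simp
  rw [isUnit_iff_ne_zero]
  intro hdet
  obtain ⟨v, hv0, hv⟩ := exists_mulVec_eq_zero_iff.mpr hdet
  obtain ⟨k, hk⟩ := exists_smul_add_smul_collocResolvent_eq_zero hc (v₀ := 0) hμ hv
  have hk0 : k = 0 := by
    have h0 := congrArg (eval 0) hk
    simp only [eval_add, eval_smul, eval_C, eval_zero_collocPoly, smul_eq_mul, mul_zero,
      add_zero, zero_add, eval_zero] at h0
    exact (mul_eq_zero.mp h0).resolve_right (eval_zero_collocResolvent_ne_zero hroot hμ hre)
  rw [hk0, zero_smul, add_zero, C_0, zero_add, smul_smul, smul_eq_zero] at hk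
  exact hv0 (eq_zero_of_collocPoly_eq_zero hc (hk.resolve_left (mul_ne_zero (pow_ne_zero _ hμ) hμ)))

lemma isUnit_det_collocAC (hc : Function.Injective c) (hπ : (piPoly s c).eval 0 ≠ 0) :
    IsUnit (collocAC s c).det := by
  rw [isUnit_iff_ne_zero]
  intro hdet
  obtain ⟨v, hv0, hv⟩ := exists_mulVec_eq_zero_iff.mpr hdet
  have hP := Lagrange.eq_smul_nodal_of_eval_eq_zero (v := fun i => (c i : ℂ))
    (Complex.ofReal_injective.comp hc)
    ((natDegree_collocPoly_le hc v).trans_eq (Fintype.card_fin s).symm)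
    fun i => by rw [← collocAC_mulVec_apply, hv, Pi.zero_apply]
  rw [← piPoly_map_eq_nodal] at hP
  have hk : (collocPoly s c v).coeff (Fintype.card (Fin s)) = 0 := by
    have h0 := congrArg (eval 0) hP
    rw [eval_zero_collocPoly, eval_smul, ← Complex.ofReal_zero, eval_map_ofReal, smul_eq_mul] at h0
    exact (mul_eq_zero.mp h0.symm).resolve_right (Complex.ofReal_ne_zero.mpr hπ)
  rw [hk, zero_smul] at hP
  exact hv0 (eq_zero_of_collocPoly_eq_zero hc hP)

lemma eval_one_collocResolvent (hsym : ∀ i : Fin s, c i + c i.rev = 1) (μ : ℂ) :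
    (collocResolvent s c μ).eval 1 = (collocResolvent s c (-μ)).eval 0 := by
  refine eval_one_resolventPoly ?_ μ
  rw [piPoly_map_eq_nodal]
  exact Lagrange.nodal_comp_one_sub_X (v := fun i => (c i : ℂ)) fun i => by exact_mod_cast hsym i

lemma stabR_mul_eval_zero_collocResolvent (hc : Function.Injective c)
    (hsym : ∀ i : Fin s, c i + c i.rev = 1) {μ : ℂ} (hμ : μ ≠ 0)
    (hdet : IsUnit (1 - μ • collocAC s c).det) :
    stabR s c μ * (collocResolvent s c μ).eval 0 = (collocResolvent s c (-μ)).eval 0 := by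
  set w := (1 - μ • collocAC s c)⁻¹ *ᵥ fun _ => (1 : ℂ)
  have hw : (1 - μ • collocAC s c) *ᵥ w = fun _ => 1 := by
    rw [mulVec_mulVec, mul_nonsing_inv _ hdet, one_mulVec]
  obtain ⟨k, hk⟩ := exists_smul_add_smul_collocResolvent_eq_zero hc hμ hw
  have e₀ := congrArg (eval 0) hk
  have e₁ := congrArg (eval 1) hk
  simp only [eval_add, eval_smul, eval_C, eval_zero_collocPoly, smul_eq_mul, mul_zero, add_zero,
    eval_zero] at e₀ e₁
  rw [← eval_one_collocResolvent hsym, stabR, collocBC_dotProduct]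
  refine mul_left_cancel₀ (pow_ne_zero (s + 1) hμ) ?_
  linear_combination (collocResolvent s c μ).eval 0 * e₁ - (collocResolvent s c μ).eval 1 * e₀

lemma norm_stabR_le_one (hc : Function.Injective c) (hsym : ∀ i : Fin s, c i + c i.rev = 1)
    (hroot : ∀ z : ℂ, z.re ≤ 0 → aeval z (tauP (piPoly s c)) ≠ 0) {μ : ℂ} (hre : μ.re ≤ 0) :
    ‖stabR s c μ‖ ≤ 1 := by
  rcases eq_or_ne μ 0 with rfl | hμ
  · simp [stabR]
  have hR := stabR_mul_eval_zero_collocResolvent hc hsym hμ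
    (isUnit_det_one_sub_smul_collocAC hc hroot hre)
  have hdeg := (natDegree_piPoly s c).le
  rw [← mul_le_mul_iff_of_pos_right
    (norm_pos_iff.mpr (eval_zero_collocResolvent_ne_zero hroot hμ hre)), one_mul, ← norm_mul, hR,
    collocResolvent, collocResolvent, eval_zero_resolventPoly_map hdeg hμ,
    eval_zero_resolventPoly_map hdeg (neg_ne_zero.mpr hμ), norm_mul, norm_mul, norm_pow, norm_pow,
    norm_neg, inv_neg]
  refine mul_le_mul_of_nonneg_left (norm_aeval_neg_le (fun r hr => ?_)
    (Complex.inv_re_nonpos hre)) (by positivity)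
  by_contra hneg
  exact hroot r (not_le.mp hneg).le hr

end Collocation

end

theorem symmetric_hatA_stable_general (s : ℕ) (c : Fin s → ℝ) (hc : StrictMono c)
    (hsym : ∀ i : Fin s, c i + c i.rev = 1)
    (hroot : ∀ z : ℂ, z.re ≤ 0 → Polynomial.aeval z (tauP (piPoly s c)) ≠ 0) :
    AStable s c ∧ ASStable s c ∧ ASIStable s c := by
  have hunit : ∀ μ : ℂ, μ.re ≤ 0 → IsUnit (1 - μ • collocAC s c).det :=
    fun μ hre => isUnit_det_one_sub_smul_collocAC hc.injective hroot hre
  have hπ : (piPoly s c).eval 0 ≠ 0 := by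
    have h0 := hroot 0 le_rfl
    rwa [← coeff_zero_eq_aeval_zero', coeff_zero_tauP, _root_.map_ne_zero] at h0
  obtain ⟨M, hM⟩ := exists_bound_inv_one_sub_smul (collocAC s c)
    (isUnit_det_collocAC hc.injective hπ) hunit
  refine ⟨fun μ hre _ => norm_stabR_le_one hc.injective hsym hroot hre,
    ⟨hunit, (∑ i, ‖collocBC s c i‖) * M, fun μ hre j => ?_⟩,
    hunit, M, fun μ hre i j => (hM μ hre i j).1⟩
  rw [← smul_eq_mul, ← Pi.smul_apply, ← vecMul_smul]
  exact norm_vecMul_apply_le _ _ j fun i => (hM μ hre i j).2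

/-- a collocation method with points symmetric with respect to `1/2` such that
`τ(π)` has no root in `ℂ⁻` is `Â`-stable. -/
theorem symmetric_hatA_stable (s : ℕ) (hs : 1 ≤ s) (c : Fin s → ℝ) (hc : StrictMono c)
    (hsym : ∀ i : Fin s, c i + c i.rev = 1)
    (hroot : ∀ z : ℂ, z.re ≤ 0 → Polynomial.aeval z (tauP (piPoly s c)) ≠ 0) :
    AStable s c ∧ ASStable s c ∧ ASIStable s c :=
  symmetric_hatA_stable_general s c hc hsym hroot
end

section
/- Let 0 ≤ c_1 < c_2 < c_3 be three real numbers, and let A be the coefficient matrix of the associated 3-stage Runge–Kutta collocation method. If c_1 > 0, then every eigenvalue of A has strictly positive real part. If c_1 = 0, then every eigenvalue of A is either 0 or has strictly positive real part. -/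
open Polynomial Matrix MeasureTheory

/-! Integrating the quadratic Lagrange polynomials gives `A` explicitly, and its characteristic
polynomial is `X³ - (e₁/3) X² + (e₂/6) X - e₃/6`, where `eₖ` are the elementary symmetric
functions of the nodes. For nonnegative nodes this real cubic satisfies the Routh–Hurwitz
conditions (nonnegative coefficients and `(e₁/3)(e₂/6) > e₃/6`), which force every nonzero root
into the open right half-plane; `0` is a root exactly when `e₃ = c₁c₂c₃ = 0`. -/

open Function

theorem Matrix.charpoly_fin_three {R : Type*} [CommRing R] (M : Matrix (Fin 3) (Fin 3) R) :
    M.charpoly = X ^ 3 - C M.trace * X ^ 2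
      + C (M 0 0 * M 1 1 - M 0 1 * M 1 0 + (M 0 0 * M 2 2 - M 0 2 * M 2 0)
          + (M 1 1 * M 2 2 - M 1 2 * M 2 1)) * X - C M.det := by
  simp only [charpoly, det_fin_three, charmatrix_apply_eq, charmatrix_apply_ne, ne_eq,
    Fin.reduceEq, not_false_eq_true, trace_fin_three, map_add, map_sub, map_mul]
  ring

theorem intervalIntegral_sub_mul_sub (p q u : ℝ) :
    ∫ t in (0 : ℝ)..u, (t - p) * (t - q) = u ^ 3 / 3 - (p + q) * u ^ 2 / 2 + p * q * u := by
  have hderiv (t : ℝ) :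
      HasDerivAt (fun t => t ^ 3 / 3 - (p + q) * t ^ 2 / 2 + p * q * t) ((t - p) * (t - q)) t :=
    (((hasDerivAt_pow 3 t).div_const 3).sub
      (((hasDerivAt_pow 2 t).const_mul (p + q)).div_const 2)).add
      ((hasDerivAt_id t).const_mul (p * q)) |>.congr_deriv (by norm_num; ring)
  rw [intervalIntegral.integral_eq_sub_of_hasDerivAt (fun t _ => hderiv t)
    (Continuous.intervalIntegrable (by fun_prop) _ _)]
  ring

theorem collocA_three_apply (c : Fin 3 → ℝ) (i : Fin 3) {j a b : Fin 3}
    (hj : Finset.univ.erase j = {a, b}) (hab : a ≠ b) :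
    collocA 3 c i j = (c i ^ 3 / 3 - (c a + c b) * c i ^ 2 / 2 + c a * c b * c i)
      / ((c j - c a) * (c j - c b)) := by
  simp only [collocA, of_apply, lagrangeFun, hj, Finset.prod_pair hab, div_mul_div_comm,
    intervalIntegral.integral_div, intervalIntegral_sub_mul_sub]

theorem charpoly_collocA_three {c : Fin 3 → ℝ} (hc : Injective c) :
    (collocA 3 c).charpoly = X ^ 3 - C ((c 0 + c 1 + c 2) / 3) * X ^ 2
      + C ((c 0 * c 1 + c 0 * c 2 + c 1 * c 2) / 6) * X - C (c 0 * c 1 * c 2 / 6) := by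
  have h01 : c 0 - c 1 ≠ 0 := sub_ne_zero.2 (hc.ne (by decide))
  have h02 : c 0 - c 2 ≠ 0 := sub_ne_zero.2 (hc.ne (by decide))
  have h12 : c 1 - c 2 ≠ 0 := sub_ne_zero.2 (hc.ne (by decide))
  have h10 : c 1 - c 0 ≠ 0 := sub_ne_zero.2 (hc.ne (by decide))
  have h20 : c 2 - c 0 ≠ 0 := sub_ne_zero.2 (hc.ne (by decide))
  have h21 : c 2 - c 1 ≠ 0 := sub_ne_zero.2 (hc.ne (by decide))
  have e0 (i : Fin 3) := collocA_three_apply c i (j := 0) (a := 1) (b := 2) (by decide) (by decide)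
  have e1 (i : Fin 3) := collocA_three_apply c i (j := 1) (a := 0) (b := 2) (by decide) (by decide)
  have e2 (i : Fin 3) := collocA_three_apply c i (j := 2) (a := 0) (b := 1) (by decide) (by decide)
  set A := collocA 3 c
  have htrace : A 0 0 + A 1 1 + A 2 2 = (c 0 + c 1 + c 2) / 3 := by
    rw [e0, e1, e2]
    field_simp
    ring
  have hminors : A 0 0 * A 1 1 - A 0 1 * A 1 0 + (A 0 0 * A 2 2 - A 0 2 * A 2 0)
      + (A 1 1 * A 2 2 - A 1 2 * A 2 1) = (c 0 * c 1 + c 0 * c 2 + c 1 * c 2) / 6 := by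
    rw [e0, e0, e0, e1, e1, e1, e2, e2, e2]
    field_simp
    ring
  have hdet : A.det = c 0 * c 1 * c 2 / 6 := by
    rw [det_fin_three, e0, e0, e0, e1, e1, e1, e2, e2, e2]
    field_simp
    ring
  rw [charpoly_fin_three, trace_fin_three, htrace, hminors, hdet]

theorem eq_zero_or_re_pos_of_aeval_cubic_eq_zero {T E D : ℝ} (hT : 0 ≤ T) (hE : 0 ≤ E)
    (hD : 0 ≤ D) (hTED : D < T * E) {z : ℂ}
    (hz : aeval z (X ^ 3 - C T * X ^ 2 + C E * X - C D) = 0) : z = 0 ∨ 0 < z.re := by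
  obtain ⟨x, y⟩ := z
  simp only [Complex.ext_iff, Complex.zero_re, Complex.zero_im]
  simp only [pow_succ, pow_zero, one_mul, aeval_sub, map_add, map_mul, aeval_X, aeval_C,
    Complex.coe_algebraMap, Complex.ext_iff, Complex.sub_re, Complex.add_re, Complex.mul_re,
    Complex.mul_im, Complex.ofReal_re, Complex.ofReal_im, zero_mul, sub_zero, Complex.zero_re,
    Complex.sub_im, Complex.add_im, add_zero, Complex.zero_im] at hz
  obtain ⟨hre, him⟩ := hz
  by_contra! hxy
  obtain ⟨hzero, hx⟩ := hxy
  rcases eq_or_ne y 0 with rfl | hy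
  · have hx' : x < 0 := hx.lt_of_ne fun h => hzero h rfl
    nlinarith [mul_neg_of_pos_of_neg (mul_pos_of_neg_of_neg hx' hx') hx',
      mul_nonneg hT (sq_nonneg x)]
  · -- Substituting `y²` into the real part leaves `-8x³ + 8Tx² - 2(E + T²)x + (TE - D)`,
    -- which is positive for `x ≤ 0`.
    have hy2 : y ^ 2 = 3 * x ^ 2 - 2 * T * x + E :=
      mul_left_cancel₀ hy (by linear_combination -him)
    nlinarith [mul_nonneg (mul_nonneg (neg_nonneg.2 hx) (neg_nonneg.2 hx)) (neg_nonneg.2 hx),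
      mul_nonneg hT (sq_nonneg x), mul_nonneg hE (neg_nonneg.2 hx),
      mul_nonneg (sq_nonneg T) (neg_nonneg.2 hx)]

theorem eq_zero_or_re_pos_of_aeval_charpoly_collocA_three {c : Fin 3 → ℝ} (hc : StrictMono c)
    (h0 : 0 ≤ c 0) {z : ℂ} (hz : aeval z (collocA 3 c).charpoly = 0) : z = 0 ∨ 0 < z.re := by
  have h1 : 0 < c 1 := h0.trans_lt (hc (by decide))
  have h2 : 0 < c 2 := h1.trans (hc (by decide))
  rw [charpoly_collocA_three hc.injective] at hz
  refine eq_zero_or_re_pos_of_aeval_cubic_eq_zero (by positivity) (by positivity) (by positivity)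
    ?_ hz
  -- `e₁e₂ - 3e₃ = ∑_{i ≠ j} cᵢ² cⱼ`
  nlinarith [mul_pos (mul_pos h1 h1) h2, mul_nonneg (mul_nonneg h0 h1.le) h2.le,
    mul_nonneg (mul_nonneg h0 h0) h1.le, mul_nonneg (mul_nonneg h0 h0) h2.le,
    mul_nonneg (mul_nonneg h0 h1.le) h1.le, mul_nonneg (mul_nonneg h0 h2.le) h2.le,
    mul_pos (mul_pos h1 h2) h2]

theorem spectrum_three_stages_general (c : Fin 3 → ℝ) (hc : StrictMono c) :
    (0 < c 0 → ∀ z : ℂ, Polynomial.aeval z (collocA 3 c).charpoly = 0 → 0 < z.re) ∧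
    (c 0 = 0 → ∀ z : ℂ, Polynomial.aeval z (collocA 3 c).charpoly = 0 → z = 0 ∨ 0 < z.re) := by
  refine ⟨fun hpos z hz => ?_,
    fun hzero _ => eq_zero_or_re_pos_of_aeval_charpoly_collocA_three hc hzero.ge⟩
  refine (eq_zero_or_re_pos_of_aeval_charpoly_collocA_three hc hpos.le hz).resolve_left ?_
  rintro rfl
  have h1 : 0 < c 1 := hpos.trans (hc (by decide))
  have h2 : 0 < c 2 := h1.trans (hc (by decide))
  rw [charpoly_collocA_three hc.injective] at hz
  simp [hpos.ne', h1.ne', h2.ne'] at hz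

/-- eigenvalue localization for forward 3-stage collocation methods. -/
theorem spectrum_three_stages (c : Fin 3 → ℝ) (h0 : 0 ≤ c 0) (hc : StrictMono c) :
    (0 < c 0 → ∀ z : ℂ, Polynomial.aeval z (collocA 3 c).charpoly = 0 → 0 < z.re) ∧
    (c 0 = 0 → ∀ z : ℂ, Polynomial.aeval z (collocA 3 c).charpoly = 0 → z = 0 ∨ 0 < z.re) :=
  spectrum_three_stages_general c hc
end

section
/- Let 0 < c_1 < c_2 < c_3 < c_4 be four positive real numbers, and let Σ_1 = c_1+c_2+c_3+c_4, Σ_2 = Σ_{1≤i<j≤4} c_i c_j, Σ_3 = Σ_{1≤i<j<k≤4} c_i c_j c_k, Σ_4 = c_1 c_2 c_3 c_4 be the elementary symmetric polynomials in c_1, c_2, c_3, c_4. Then Σ_1 Σ_2 Σ_3 − 2 Σ_3² − 3 Σ_1² Σ_4 > 0. -/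
open Polynomial Matrix MeasureTheory

/-!
Expanding, `Σ₁ Σ₂ Σ₃ - 2 Σ₃² - 3 Σ₁² Σ₄` is the sum of the squares `(cᵢ cⱼ (cₖ - cₗ))²` over the
six splittings of the four indices into two pairs, plus `cᵢ cⱼ cₖ (σ₁ σ₂ - 5 σ₃)` over the four
triples, where `σ₁, σ₂, σ₃` are the elementary symmetric polynomials of the triple. By AM-GM
`σ₁ σ₂ ≥ 9 σ₃`, so each triple contributes at least `4 (cᵢ cⱼ cₖ)² > 0`.
-/

section

variable {R : Type*} [CommRing R]

theorem add_mul_add_sub_nine_mul_eq (a b c : R) :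
    (a + b + c) * (a * b + b * c + c * a) - 9 * (a * b * c) =
      a * (b - c) ^ 2 + b * (c - a) ^ 2 + c * (a - b) ^ 2 := by
  ring

theorem esymm_four_combination_eq (a b c d : R) :
    (a + b + c + d) * (a*b + a*c + a*d + b*c + b*d + c*d) *
          (a*b*c + a*b*d + a*c*d + b*c*d) -
        2 * (a*b*c + a*b*d + a*c*d + b*c*d) ^ 2 - 3 * (a + b + c + d) ^ 2 * (a*b*c*d) =
      (a*b*(c - d)) ^ 2 + (a*c*(b - d)) ^ 2 + (a*d*(b - c)) ^ 2 +
        (b*c*(a - d)) ^ 2 + (b*d*(a - c)) ^ 2 + (c*d*(a - b)) ^ 2 +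
        a*b*c * ((a + b + c) * (a*b + b*c + c*a) - 5 * (a*b*c)) +
        a*b*d * ((a + b + d) * (a*b + b*d + d*a) - 5 * (a*b*d)) +
        a*c*d * ((a + c + d) * (a*c + c*d + d*a) - 5 * (a*c*d)) +
        b*c*d * ((b + c + d) * (b*c + c*d + d*b) - 5 * (b*c*d)) := by
  ring

end

section

variable {R : Type*} [CommRing R] [LinearOrder R] [IsStrictOrderedRing R]

theorem nine_mul_mul_le_add_mul_add {a b c : R} (ha : 0 ≤ a) (hb : 0 ≤ b) (hc : 0 ≤ c) :
    9 * (a * b * c) ≤ (a + b + c) * (a * b + b * c + c * a) := by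
  rw [← sub_nonneg, add_mul_add_sub_nine_mul_eq]
  positivity

theorem mul_mul_mul_add_mul_add_sub_five_mul_pos {a b c : R} (ha : 0 < a) (hb : 0 < b)
    (hc : 0 < c) : 0 < a * b * c * ((a + b + c) * (a * b + b * c + c * a) - 5 * (a * b * c)) := by
  have habc : 0 < a * b * c := by positivity
  have := nine_mul_mul_le_add_mul_add ha.le hb.le hc.le
  exact mul_pos habc (by linarith)

theorem esymm_four_combination_pos {a b c d : R} (ha : 0 < a) (hb : 0 < b) (hc : 0 < c)
    (hd : 0 < d) :
    0 < (a + b + c + d) * (a*b + a*c + a*d + b*c + b*d + c*d) *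
          (a*b*c + a*b*d + a*c*d + b*c*d) -
        2 * (a*b*c + a*b*d + a*c*d + b*c*d) ^ 2 - 3 * (a + b + c + d) ^ 2 * (a*b*c*d) := by
  rw [esymm_four_combination_eq]
  have habc := mul_mul_mul_add_mul_add_sub_five_mul_pos ha hb hc
  have habd := mul_mul_mul_add_mul_add_sub_five_mul_pos ha hb hd
  have hacd := mul_mul_mul_add_mul_add_sub_five_mul_pos ha hc hd
  have hbcd := mul_mul_mul_add_mul_add_sub_five_mul_pos hb hc hd
  have hpairs : 0 ≤ (a*b*(c - d)) ^ 2 + (a*c*(b - d)) ^ 2 + (a*d*(b - c)) ^ 2 +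
      (b*c*(a - d)) ^ 2 + (b*d*(a - c)) ^ 2 + (c*d*(a - b)) ^ 2 := by positivity
  linarith

end

/-- for `0 < c₁ < c₂ < c₃ < c₄` the elementary symmetric polynomials satisfy
`Σ₁ Σ₂ Σ₃ - 2 Σ₃² - 3 Σ₁² Σ₄ > 0`. -/
theorem elementary_symmetric_inequality (c₁ c₂ c₃ c₄ : ℝ)
    (h1 : 0 < c₁) (h12 : c₁ < c₂) (h23 : c₂ < c₃) (h34 : c₃ < c₄) :
    0 < (c₁ + c₂ + c₃ + c₄) *
          (c₁*c₂ + c₁*c₃ + c₁*c₄ + c₂*c₃ + c₂*c₄ + c₃*c₄) *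
          (c₁*c₂*c₃ + c₁*c₂*c₄ + c₁*c₃*c₄ + c₂*c₃*c₄) -
        2 * (c₁*c₂*c₃ + c₁*c₂*c₄ + c₁*c₃*c₄ + c₂*c₃*c₄) ^ 2 -
        3 * (c₁ + c₂ + c₃ + c₄) ^ 2 * (c₁*c₂*c₃*c₄) := by
  have h2 := h1.trans h12
  have h3 := h2.trans h23
  exact esymm_four_combination_pos h1 h2 h3 (h3.trans h34)
end
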